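/- With T̃ = G/N as above (G = {(a,b) ∈ (ℂ^×)ⁿ×(ℂ^×)ⁿ : ∏ a_kb_k = 1}, N = {(x,x) : ∏ x_k = 1}), let θ : T̃ → T̃ be the automorphism induced by (a₁,…,a_n; b₁,…,b_n) ↦ (a₁,…,a_{n−1}, b_n; b₁,…,b_{n−1}, a_n). Then θ fixes ker t̃ pointwise, but for the element c = [(i,…,i),(−i,…,−i)] ∈ T̃ (where i = √−1, noting ∏ i·(−i) = 1), one has θ(c) ≠ c; in fact θ(c)·c^{-1} is the unique non-trivial element of ker t̃, and u(θ(c)c^{-1}) = −1. -/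

import Mathlib

/-!
`SpinTorus ι M = prodOne ι M ⧸ diag ι M` is the paper's `T̃ = G/N` (over any commutative group
`M`), with `t̃ = ratio`, `u = prodFst` and `θ = swap j`.

Every class in `ker t̃` has a diagonal representative `(x, x)`, which `θ` fixes. On such a class
`u² = ∏ x_k² = 1`, and `(x, x)` lies in `N` as soon as `∏ x_k = 1`; so `u` is injective on
`ker t̃`, whose only non-trivial element is therefore the one with `u = -1`. The quotient
`θ(c)c⁻¹` is represented by `(e_j(-i/i), e_j(i/(-i))) = (e_j(-1), e_j(-1))`, which is diagonal
with `u = -1`.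
-/

/-- The ambient group `(ℂ^×)ⁿ × (ℂ^×)ⁿ`. -/
abbrev Mn (n : ℕ) := (Fin n → ℂˣ) × (Fin n → ℂˣ)

open Function QuotientGroup

lemma Units.eq_neg_one_of_mul_self_eq_one {R : Type*} [Ring R] [NoZeroDivisors R] {u : Rˣ}
    (h : u * u = 1) (h1 : u ≠ 1) : u = -1 := by
  rcases mul_self_eq_one_iff.1 (by rw [← Units.val_mul, h, Units.val_one] : (u : R) * u = 1)
    with h' | h'
  · exact absurd (Units.val_eq_one.1 h') h1
  · exact Units.ext (by simpa using h')

namespace SpinTorus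

section SwapAt

variable {ι M : Type*} [DecidableEq ι]

def swapAt [Monoid M] (j : ι) : (ι → M) × (ι → M) →* (ι → M) × (ι → M) where
  toFun p := (update p.1 j (p.2 j), update p.2 j (p.1 j))
  map_one' := by simp
  map_mul' p p' := by simp [update_mul]

lemma swapAt_apply [Monoid M] (j : ι) (p : (ι → M) × (ι → M)) :
    swapAt j p = (update p.1 j (p.2 j), update p.2 j (p.1 j)) := rfl

lemma swapAt_of_fst_eq_snd [Monoid M] (j : ι) {p : (ι → M) × (ι → M)} (h : p.1 = p.2) :
    swapAt j p = p := by
  ext k <;> simp [swapAt_apply, h]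

lemma swapAt_mul_inv [Group M] (j : ι) (p : (ι → M) × (ι → M)) :
    swapAt j p * p⁻¹ = (Pi.mulSingle j (p.2 j / p.1 j), Pi.mulSingle j (p.1 j / p.2 j)) := by
  ext k <;> by_cases h : k = j <;> simp [swapAt_apply, h, div_eq_mul_inv]

lemma prod_swapAt_mul [Fintype ι] [CommMonoid M] (j : ι) (p : (ι → M) × (ι → M)) :
    ∏ k, (swapAt j p).1 k * (swapAt j p).2 k = ∏ k, p.1 k * p.2 k := by
  refine Finset.prod_congr rfl fun k _ => ?_
  by_cases h : k = j
  · subst h; simp [swapAt_apply, mul_comm]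
  · simp [swapAt_apply, h]

end SwapAt

variable (ι M : Type*) [Fintype ι] [CommGroup M]

def prodOne : Subgroup ((ι → M) × (ι → M)) :=
  MonoidHom.ker
    { toFun := fun p => ∏ k, p.1 k * p.2 k
      map_one' := by simp
      map_mul' := fun p p' => by simp [Finset.prod_mul_distrib, mul_mul_mul_comm] }

def diag : Subgroup (prodOne ι M) where
  carrier := {q | q.1.1 = q.1.2 ∧ ∏ k, q.1.1 k = 1}
  one_mem' := by simp
  mul_mem' := by
    rintro q q' ⟨hq, hq1⟩ ⟨hq', hq1'⟩
    exact ⟨by simp [hq, hq'], by simp [Finset.prod_mul_distrib, hq1, hq1']⟩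
  inv_mem' := by
    rintro q ⟨hq, hq1⟩
    exact ⟨by simp [hq], by simp [Finset.prod_inv_distrib, hq1]⟩

end SpinTorus

abbrev SpinTorus (ι M : Type*) [Fintype ι] [CommGroup M] :=
  SpinTorus.prodOne ι M ⧸ SpinTorus.diag ι M

namespace SpinTorus

variable {ι M : Type*} [Fintype ι] [CommGroup M]

lemma mem_prodOne {p : (ι → M) × (ι → M)} :
    p ∈ prodOne ι M ↔ ∏ k, p.1 k * p.2 k = 1 := Iff.rfl

lemma mem_diag {q : prodOne ι M} :
    q ∈ diag ι M ↔ q.1.1 = q.1.2 ∧ ∏ k, q.1.1 k = 1 := Iff.rfl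

def ratio : SpinTorus ι M →* (ι → M) :=
  lift _ (divMonoidHom.comp (prodOne ι M).subtype) fun q hq => by
    simp [(mem_diag.1 hq).1]

lemma ratio_mk (q : prodOne ι M) : ratio (q : SpinTorus ι M) = q.1.1 / q.1.2 := rfl

def prodFst : SpinTorus ι M →* M :=
  lift _ { toFun := fun q => ∏ k, q.1.1 k
           map_one' := by simp
           map_mul' := by simp [Finset.prod_mul_distrib] }
    fun _ hq => (mem_diag.1 hq).2

lemma prodFst_mk (q : prodOne ι M) : prodFst (q : SpinTorus ι M) = ∏ k, q.1.1 k := rfl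

lemma exists_mk_fst_eq_snd_of_mem_ker_ratio {x : SpinTorus ι M} (hx : x ∈ ratio.ker) :
    ∃ q : prodOne ι M, (q : SpinTorus ι M) = x ∧ q.1.1 = q.1.2 := by
  induction x using QuotientGroup.induction_on with
  | H q => exact ⟨q, rfl, div_eq_one.1 hx⟩

lemma prodFst_mul_self_eq_one_of_mem_ker_ratio {x : SpinTorus ι M} (hx : x ∈ ratio.ker) :
    prodFst x * prodFst x = 1 := by
  obtain ⟨q, rfl, hq⟩ := exists_mk_fst_eq_snd_of_mem_ker_ratio hx
  rw [prodFst_mk, ← Finset.prod_mul_distrib]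
  conv_lhs => enter [2, k, 2]; rw [hq]
  exact q.2

lemma injOn_prodFst_ker_ratio :
    Set.InjOn prodFst ((ratio : SpinTorus ι M →* _).ker : Set (SpinTorus ι M)) := by
  intro x hx y hy hxy
  obtain ⟨q, hq, hdiag⟩ := exists_mk_fst_eq_snd_of_mem_ker_ratio (mul_mem hx (inv_mem hy))
  have hq1 : ∏ k, q.1.1 k = 1 := by
    rw [← prodFst_mk, hq, map_mul, map_inv, hxy, mul_inv_cancel]
  have : x * y⁻¹ = 1 := by rw [← hq, QuotientGroup.eq_one_iff]; exact ⟨hdiag, hq1⟩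
  exact mul_inv_eq_one.1 this

section Swap

variable [DecidableEq ι]

def swapAtProdOne (j : ι) : prodOne ι M →* prodOne ι M :=
  ((swapAt j).comp (prodOne ι M).subtype).codRestrict _ fun q => by
    rw [MonoidHom.comp_apply, mem_prodOne, prod_swapAt_mul]
    exact q.2

lemma swapAtProdOne_of_fst_eq_snd (j : ι) {q : prodOne ι M} (h : q.1.1 = q.1.2) :
    swapAtProdOne j q = q :=
  Subtype.ext (swapAt_of_fst_eq_snd j h)

def swap (j : ι) : SpinTorus ι M →* SpinTorus ι M :=
  map _ _ (swapAtProdOne j) fun q hq => by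
    rwa [Subgroup.mem_comap, swapAtProdOne_of_fst_eq_snd j (mem_diag.1 hq).1]

lemma swap_mk (j : ι) (q : prodOne ι M) :
    swap j (q : SpinTorus ι M) = (swapAtProdOne j q : SpinTorus ι M) := rfl

lemma swap_eq_self_of_mem_ker_ratio (j : ι) {x : SpinTorus ι M} (hx : x ∈ ratio.ker) :
    swap j x = x := by
  obtain ⟨q, rfl, hq⟩ := exists_mk_fst_eq_snd_of_mem_ker_ratio hx
  rw [swap_mk, swapAtProdOne_of_fst_eq_snd j hq]

lemma swap_mk_mul_inv (j : ι) (q : prodOne ι M) :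
    ∃ e : prodOne ι M, swap j (q : SpinTorus ι M) * (q : SpinTorus ι M)⁻¹ = e ∧
      e.1 = (Pi.mulSingle j (q.1.2 j / q.1.1 j), Pi.mulSingle j (q.1.1 j / q.1.2 j)) :=
  ⟨swapAtProdOne j q * q⁻¹, rfl, swapAt_mul_inv j q.1⟩

end Swap

end SpinTorus

/-- with `T̃ = G/N` as in Statement 7, the automorphism `θ` induced by
swapping the n-th coordinates of the two vectors fixes `ker t̃` pointwise, but moves
the central element `c = [(i,…,i),(−i,…,−i)]`: indeed `θ(c)·c⁻¹` is the unique
non-trivial element of `ker t̃` and `u(θ(c)c⁻¹) = −1`. -/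
theorem stmt8 (n : ℕ) (hn : 1 ≤ n)
    (G : Subgroup (Mn n))
    (hG : ∀ p : Mn n, p ∈ G ↔ (∏ k, p.1 k * p.2 k) = 1)
    (N : Subgroup G)
    (hN : ∀ q : G, q ∈ N ↔
      ((q : Mn n).1 = (q : Mn n).2 ∧ (∏ k, (q : Mn n).1 k) = 1)) :
    let j : Fin n := ⟨n - 1, by omega⟩
    let Iu : ℂˣ := Units.mk0 Complex.I Complex.I_ne_zero
    ∃ t : (G ⧸ N) →* (Fin n → ℂˣ),
      (∀ q : G, t (QuotientGroup.mk q) = fun k => (q : Mn n).1 k * ((q : Mn n).2 k)⁻¹)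
      ∧ ∃ θ : (G ⧸ N) →* (G ⧸ N),
        -- θ is induced by swapping the n-th coordinates
        (∀ (q : G)
            (hq' : ((Function.update (q : Mn n).1 j ((q : Mn n).2 j),
                     Function.update (q : Mn n).2 j ((q : Mn n).1 j)) : Mn n) ∈ G),
            θ (QuotientGroup.mk q) = QuotientGroup.mk (⟨_, hq'⟩ : G))
        -- θ fixes ker t̃ pointwise
        ∧ (∀ x ∈ t.ker, θ x = x)
        -- the element c = [(i,…,i),(−i,…,−i)] exists in T̃ …
        ∧ (∃ q : G, (q : Mn n).1 = (fun _ => Iu) ∧ (q : Mn n).2 = (fun _ => -Iu))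
        -- … and for (any representative of) it:
        ∧ (∀ q : G, (q : Mn n).1 = (fun _ => Iu) → (q : Mn n).2 = (fun _ => -Iu) →
            θ (QuotientGroup.mk q) ≠ QuotientGroup.mk q
            ∧ θ (QuotientGroup.mk q) * (QuotientGroup.mk q)⁻¹ ∈ t.ker
            ∧ θ (QuotientGroup.mk q) * (QuotientGroup.mk q)⁻¹ ≠ 1
            ∧ (∀ x ∈ t.ker, x ≠ 1 →
                x = θ (QuotientGroup.mk q) * (QuotientGroup.mk q)⁻¹)
            -- u(θ(c)c⁻¹) = −1
            ∧ (∀ r : G,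
                (QuotientGroup.mk r : G ⧸ N)
                  = θ (QuotientGroup.mk q) * (QuotientGroup.mk q)⁻¹ →
                (∏ k, (r : Mn n).1 k) = -1)) := by
  intro j Iu
  obtain rfl : G = SpinTorus.prodOne (Fin n) ℂˣ := Subgroup.ext hG
  obtain rfl : N = SpinTorus.diag (Fin n) ℂˣ := Subgroup.ext hN
  have hIu : Iu * -Iu = 1 ∧ -Iu / Iu = -1 ∧ Iu / -Iu = -1 := by
    refine ⟨?_, ?_, ?_⟩ <;> ext <;> simp [Iu]
  refine ⟨SpinTorus.ratio, fun _ => funext fun _ => div_eq_mul_inv _ _, SpinTorus.swap j,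
    fun _ _ => rfl, fun _ => SpinTorus.swap_eq_self_of_mem_ker_ratio j,
    ⟨⟨(fun _ => Iu, fun _ => -Iu), by simp [SpinTorus.mem_prodOne, hIu.1]⟩, rfl, rfl⟩, ?_⟩
  intro q hq₁ hq₂
  obtain ⟨e, he, he₁⟩ := SpinTorus.swap_mk_mul_inv j q
  rw [hq₁, hq₂] at he₁
  simp only [hIu.2] at he₁
  rw [he]
  have hratio : (e : SpinTorus (Fin n) ℂˣ) ∈ SpinTorus.ratio.ker := by
    rw [MonoidHom.mem_ker, SpinTorus.ratio_mk, he₁, div_self']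
  have hprod : SpinTorus.prodFst (e : SpinTorus (Fin n) ℂˣ) = -1 := by
    rw [SpinTorus.prodFst_mk, he₁, Finset.prod_pi_mulSingle']
    simp
  have hne : (e : SpinTorus (Fin n) ℂˣ) ≠ 1 := fun h => by
    rw [h, map_one] at hprod
    norm_num [Units.ext_iff] at hprod
  refine ⟨fun h => hne (by rw [← he, h, mul_inv_cancel]), hratio, hne, fun x hx hx1 => ?_,
    fun r hr => by rw [← SpinTorus.prodFst_mk, hr, hprod]⟩
  refine SpinTorus.injOn_prodFst_ker_ratio hx hratio ?_
  rw [hprod]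
  refine Units.eq_neg_one_of_mul_self_eq_one
    (SpinTorus.prodFst_mul_self_eq_one_of_mem_ker_ratio hx) fun h => hx1 ?_
  exact SpinTorus.injOn_prodFst_ker_ratio hx (one_mem _) (by rw [h, map_one])
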